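/- arXiv:2205.03570 — 2 statements merged into one kernel-verified Lean document; each statement's English description precedes it below -/
import Mathlib

section
/- For any x ∈ int(K), with X = mat(x): (a) X − T_x = U_x, where U_x is block diagonal with i-th block equal to the matrix with zero first row and column and lower-right block (x^{(i)}_1 − β_{x^{(i)}}) P_{x^{(i)}}, where P_v = I − v_{2:m}v_{2:m}ᵀ/‖v_{2:m}‖² is the orthogonal projection onto the complement of v_{2:m} (and the block is zero when v_{2:m} = 0); (b) T_x X^{−1} = X^{−1} T_x = blkdiag(I − U_{x^{(i)}}/x^{(i)}_1 : i = 1, …, k) and T_x X^{−1} e = e; (c) X and T_x commute and X − T_x is positive semidefinite. -/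
open scoped BigOperators
open Matrix

namespace SOCP

/-- Index type for a block vector with `k` blocks, block `i` having dimension `d i + 1`. -/
abbrev Idx {k : ℕ} (d : Fin k → ℕ) : Type := (i : Fin k) × Fin (d i + 1)

/-- The `i`-th block of a block vector. -/
def blk {k : ℕ} {d : Fin k → ℕ} (v : Idx d → ℝ) (i : Fin k) : Fin (d i + 1) → ℝ :=
  fun j => v ⟨i, j⟩

/-- Squared Euclidean norm of the tail `u_{2:m}` of a single block. -/
def tailNormSq {m : ℕ} (u : Fin (m + 1) → ℝ) : ℝ := ∑ j : Fin m, u j.succ ^ 2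

/-- Euclidean norm of the tail `u_{2:m}` of a single block. -/
noncomputable def tailNorm {m : ℕ} (u : Fin (m + 1) → ℝ) : ℝ := Real.sqrt (tailNormSq u)

/-- Membership in the cone `K` (a direct product of second-order cones). -/
def inK {k : ℕ} {d : Fin k → ℕ} (v : Idx d → ℝ) : Prop :=
  ∀ i : Fin k, tailNorm (blk v i) ≤ v ⟨i, 0⟩

/-- Membership in the interior of the cone `K`. -/
def inIntK {k : ℕ} {d : Fin k → ℕ} (v : Idx d → ℝ) : Prop :=
  ∀ i : Fin k, tailNorm (blk v i) < v ⟨i, 0⟩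

/-- Euclidean inner product of vectors. -/
def dotV {ι : Type*} [Fintype ι] (u v : ι → ℝ) : ℝ := ∑ a, u a * v a

/-- Euclidean norm of a vector. -/
noncomputable def vnorm {ι : Type*} [Fintype ι] (v : ι → ℝ) : ℝ :=
  Real.sqrt (∑ a, v a ^ 2)

/-- Blockwise Jordan product. -/
def jmul {k : ℕ} {d : Fin k → ℕ} (u v : Idx d → ℝ) : Idx d → ℝ := fun a =>
  if a.2 = 0 then ∑ j, u ⟨a.1, j⟩ * v ⟨a.1, j⟩
  else u ⟨a.1, 0⟩ * v a + v ⟨a.1, 0⟩ * u a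

/-- The unit element `e` of the Jordan algebra. -/
def unitE {k : ℕ} {d : Fin k → ℕ} : Idx d → ℝ := fun a => if a.2 = 0 then 1 else 0

/-- `λ_min` of the `i`-th block. -/
noncomputable def lamMin {k : ℕ} {d : Fin k → ℕ} (v : Idx d → ℝ) (i : Fin k) : ℝ :=
  v ⟨i, 0⟩ - tailNorm (blk v i)

/-- `λ_max` of the `i`-th block. -/
noncomputable def lamMax {k : ℕ} {d : Fin k → ℕ} (v : Idx d → ℝ) (i : Fin k) : ℝ :=
  v ⟨i, 0⟩ + tailNorm (blk v i)

/-- Arrow-head matrix of a single block. -/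
def arrowBlk {m : ℕ} (u : Fin (m + 1) → ℝ) : Matrix (Fin (m + 1)) (Fin (m + 1)) ℝ :=
  Matrix.of fun j j' =>
    if j = 0 then u j' else if j' = 0 then u j else if j = j' then u 0 else 0

/-- Arrow-head matrix `mat(v)` (block diagonal). -/
def matV {k : ℕ} {d : Fin k → ℕ} (v : Idx d → ℝ) : Matrix (Idx d) (Idx d) ℝ :=
  Matrix.blockDiagonal' fun i => arrowBlk (blk v i)

/-- `β_u = sqrt(u_1^2 - ‖u_{2:m}‖^2)` for a single block. -/
noncomputable def betaOf {m : ℕ} (u : Fin (m + 1) → ℝ) : ℝ :=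
  Real.sqrt (u 0 ^ 2 - tailNormSq u)

/-- The matrix `T_u` for a single block. -/
noncomputable def Tblk {m : ℕ} (u : Fin (m + 1) → ℝ) :
    Matrix (Fin (m + 1)) (Fin (m + 1)) ℝ :=
  Matrix.of fun j j' =>
    if j = 0 then u j'
    else if j' = 0 then u j
    else (if j = j' then betaOf u else 0) + u j * u j' / (betaOf u + u 0)

/-- The matrix `T_x` (block diagonal). -/
noncomputable def TV {k : ℕ} {d : Fin k → ℕ} (x : Idx d → ℝ) :
    Matrix (Idx d) (Idx d) ℝ :=
  Matrix.blockDiagonal' fun i => Tblk (blk x i)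

/-- `w_{xs} = T_x s`. -/
noncomputable def wxs {k : ℕ} {d : Fin k → ℕ} (x s : Idx d → ℝ) : Idx d → ℝ :=
  (TV x).mulVec s

/-- Central-path coefficient `μ(x,s) = xᵀs/k`. -/
noncomputable def muV {k : ℕ} {d : Fin k → ℕ} (x s : Idx d → ℝ) : ℝ :=
  dotV x s / (k : ℝ)

/-- Central-path distance `d_2(x,s) = √2 ‖w_{xs} - μ e‖`. -/
noncomputable def d2 {k : ℕ} {d : Fin k → ℕ} (x s : Idx d → ℝ) : ℝ :=
  Real.sqrt 2 * vnorm (wxs x s - muV x s • unitE)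

/-- Central-path distance `d_∞(x,s)`. -/
noncomputable def dInf {k : ℕ} {d : Fin k → ℕ} (x s : Idx d → ℝ) : ℝ :=
  ⨆ i : Fin k, max |lamMax (wxs x s) i - muV x s| |lamMin (wxs x s) i - muV x s|

/-- The matrix `Q = diag(1, -I)` for a single block. -/
def Qblk {m : ℕ} : Matrix (Fin (m + 1)) (Fin (m + 1)) ℝ :=
  Matrix.of fun j j' => if j = j' then (if j = 0 then (1 : ℝ) else -1) else 0

/-- The scaling group `G` of block matrices `Θ G` with `(Gⁱ)ᵀ Qⁱ Gⁱ = Qⁱ`. -/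
def scalingGroup {k : ℕ} (d : Fin k → ℕ) : Set (Matrix (Idx d) (Idx d) ℝ) :=
  { D | ∃ (θ : Fin k → ℝ) (G : ∀ i, Matrix (Fin (d i + 1)) (Fin (d i + 1)) ℝ),
      (∀ i, 0 < θ i) ∧ (∀ i, (G i)ᵀ * Qblk * G i = Qblk) ∧
      D = Matrix.blockDiagonal' fun i => θ i • G i }

/-- Operator 2-norm of a matrix. -/
noncomputable def op2 {m n : Type*} [Fintype m] [Fintype n] [DecidableEq n]
    (M : Matrix m n ℝ) : ℝ :=
  ‖LinearMap.toContinuousLinearMap (Matrix.toEuclideanLin M)‖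

/-- `R_{xs} = T_x X⁻¹ S T_x`. -/
noncomputable def Rxs {k : ℕ} {d : Fin k → ℕ} (x s : Idx d → ℝ) :
    Matrix (Idx d) (Idx d) ℝ :=
  TV x * (matV x)⁻¹ * matV s * TV x

/-- The scaled Newton system of the infeasible IPM (Monteiro–Zhang family). -/
def NewtonSys {k p : ℕ} {d : Fin k → ℕ} (A : Matrix (Fin p) (Idx d) ℝ)
    (Cm : Matrix (Idx d) (Idx d) ℝ) (x : Idx d → ℝ) (y : Fin p → ℝ) (s : Idx d → ℝ)
    (ν : ℝ) (D : Matrix (Idx d) (Idx d) ℝ)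
    (dx : Idx d → ℝ) (dy : Fin p → ℝ) (ds : Idx d → ℝ) : Prop :=
  A.mulVec dx = -((1 - ν) • A.mulVec x) ∧
  Aᵀ.mulVec dy + Cm.mulVec dx + ds =
    -((1 - ν) • (Aᵀ.mulVec y + Cm.mulVec x + s)) ∧
  (matV ((D⁻¹)ᵀ.mulVec x)).mulVec (D.mulVec ds)
      + (matV (D.mulVec s)).mulVec ((D⁻¹)ᵀ.mulVec dx)
    = (ν * muV x s) • unitE - jmul ((D⁻¹)ᵀ.mulVec x) (D.mulVec s)

/-- Central-path neighborhood `N_2(γ)`. -/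
def N2 {k : ℕ} (d : Fin k → ℕ) (p : ℕ) (γ : ℝ) :
    Set ((Idx d → ℝ) × (Fin p → ℝ) × (Idx d → ℝ)) :=
  { z | inIntK z.1 ∧ inIntK z.2.2 ∧ d2 z.1 z.2.2 ≤ γ * muV z.1 z.2.2 }

/-- Central-path neighborhood `N_∞(γ)`. -/
def NInf {k : ℕ} (d : Fin k → ℕ) (p : ℕ) (γ : ℝ) :
    Set ((Idx d → ℝ) × (Fin p → ℝ) × (Idx d → ℝ)) :=
  { z | inIntK z.1 ∧ inIntK z.2.2 ∧ dInf z.1 z.2.2 ≤ γ * muV z.1 z.2.2 }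

/-- The matrix `U_u` for a single block: zero first row and column and lower-right block
`(u_1 - β_u) P_u`, with `P_u` the projection onto the complement of the tail of `u`
(zero when the tail vanishes). -/
noncomputable def Ublk {m : ℕ} (u : Fin (m + 1) → ℝ) :
    Matrix (Fin (m + 1)) (Fin (m + 1)) ℝ :=
  Matrix.of fun j j' =>
    if j = 0 ∨ j' = 0 then 0
    else if tailNormSq u = 0 then 0
    else (u 0 - betaOf u) * ((if j = j' then (1 : ℝ) else 0) - u j * u j' / tailNormSq u)

/-- The block-diagonal matrix `U_x`. -/
noncomputable def UV {k : ℕ} {d : Fin k → ℕ} (x : Idx d → ℝ) :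
    Matrix (Idx d) (Idx d) ℝ :=
  Matrix.blockDiagonal' fun i => Ublk (blk x i)

/-- `Γ_p = 2 (γ²/2 + (1-ν)² k)^{1/2} / (1 - 3γ)`. -/
noncomputable def GammaP (γ ν : ℝ) (k : ℕ) : ℝ :=
  2 * Real.sqrt (γ ^ 2 / 2 + (1 - ν) ^ 2 * k) / (1 - 3 * γ)

/-- `Γ̃ = (4(γ² + δ²)/(1-3γ)²) (1 - δ/√(2k))⁻¹`. -/
noncomputable def GammaTilde (γ δ : ℝ) (k : ℕ) : ℝ :=
  4 * (γ ^ 2 + δ ^ 2) / (1 - 3 * γ) ^ 2 * (1 - δ / Real.sqrt (2 * k))⁻¹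

/-! On a single block `u = (u₀, ū)` the difference `U = mat(u) - T_u` vanishes outside the
lower-right corner, where it is `(u₀ - β) P` with `P` the projection killing `ū`; hence
`mat(u) U = U mat(u) = u₀ U`. So `T_u = (1 - u₀⁻¹ U) mat(u) = mat(u) (1 - u₀⁻¹ U)`, which
yields the identities once `mat(u)` is known to be invertible (`u₀² > ‖ū‖²` leaves its kernel
trivial), and `U ⪰ 0` because `β ≤ u₀` and `P` is a projection. Everything is block diagonal
over the cones. -/

end SOCP

namespace Matrix

variable {o : Type*} [Fintype o] [DecidableEq o] {m' : o → Type*} [∀ i, Fintype (m' i)]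

theorem blockDiagonal'_mulVec_apply {α : Type*} [NonUnitalNonAssocSemiring α]
    (M : ∀ i, Matrix (m' i) (m' i) α) (v : (Σ i, m' i) → α) (i : o) (j : m' i) :
    (blockDiagonal' M *ᵥ v) ⟨i, j⟩ = (M i *ᵥ fun j' => v ⟨i, j'⟩) j := by
  simp only [mulVec, dotProduct, ← Finset.univ_sigma_univ, Finset.sum_sigma]
  rw [Fintype.sum_eq_single i fun i' hi' =>
    Finset.sum_eq_zero fun j' _ => by rw [blockDiagonal'_apply_ne _ _ _ hi'.symm, zero_mul]]
  simp only [blockDiagonal'_apply_eq]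

theorem inv_blockDiagonal' [∀ i, DecidableEq (m' i)] {α : Type*} [CommRing α]
    (M : ∀ i, Matrix (m' i) (m' i) α) (hM : ∀ i, IsUnit (M i).det) :
    (blockDiagonal' M)⁻¹ = blockDiagonal' fun i => (M i)⁻¹ := by
  refine inv_eq_right_inv ?_
  rw [← blockDiagonal'_mul]
  simp only [mul_nonsing_inv _ (hM _)]
  exact blockDiagonal'_one

theorem PosSemidef.blockDiagonal' {R : Type*} [Ring R] [PartialOrder R] [StarRing R]
    [StarOrderedRing R] {M : ∀ i, Matrix (m' i) (m' i) R} (hM : ∀ i, (M i).PosSemidef) :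
    (Matrix.blockDiagonal' M).PosSemidef := by
  refine of_dotProduct_mulVec_nonneg ?_ fun v => ?_
  · rw [IsHermitian, blockDiagonal'_conjTranspose]
    exact congrArg _ (funext fun i => (hM i).1)
  · simp only [dotProduct, ← Finset.univ_sigma_univ, Finset.sum_sigma,
      blockDiagonal'_mulVec_apply]
    exact Finset.sum_nonneg fun i _ => (hM i).dotProduct_mulVec_nonneg (fun j => v ⟨i, j⟩)

end Matrix

namespace SOCP

section SingleBlock

variable {m : ℕ} {u : Fin (m + 1) → ℝ}

theorem tailNormSq_nonneg (u : Fin (m + 1) → ℝ) : 0 ≤ tailNormSq u :=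
  Finset.sum_nonneg fun _ _ => sq_nonneg _

theorem eq_zero_of_tailNormSq_eq_zero (h : tailNormSq u = 0) {j : Fin (m + 1)} (hj : j ≠ 0) :
    u j = 0 := by
  obtain ⟨j, rfl⟩ := Fin.exists_succ_eq_of_ne_zero hj
  exact pow_eq_zero_iff two_ne_zero |>.1 <|
    (Finset.sum_eq_zero_iff_of_nonneg fun _ _ => sq_nonneg _).1 h j (Finset.mem_univ j)

theorem tailNormSq_lt_sq (hu : tailNorm u < u 0) : tailNormSq u < u 0 ^ 2 :=
  calc tailNormSq u = tailNorm u ^ 2 := (Real.sq_sqrt (tailNormSq_nonneg u)).symm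
    _ < u 0 ^ 2 := pow_lt_pow_left₀ hu (Real.sqrt_nonneg _) two_ne_zero

theorem pos_of_tailNorm_lt (hu : tailNorm u < u 0) : 0 < u 0 :=
  (Real.sqrt_nonneg _).trans_lt hu

theorem betaOf_sq (hu : tailNorm u < u 0) : betaOf u ^ 2 = u 0 ^ 2 - tailNormSq u :=
  Real.sq_sqrt (sub_nonneg.2 (tailNormSq_lt_sq hu).le)

theorem betaOf_pos (hu : tailNorm u < u 0) : 0 < betaOf u :=
  Real.sqrt_pos.2 (sub_pos.2 (tailNormSq_lt_sq hu))

theorem betaOf_le (hu : tailNorm u < u 0) : betaOf u ≤ u 0 := by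
  rw [betaOf, Real.sqrt_le_left (pos_of_tailNorm_lt hu).le]
  linarith [tailNormSq_nonneg u]

theorem betaOf_eq_of_tailNormSq_eq_zero (hu : tailNorm u < u 0) (h : tailNormSq u = 0) :
    betaOf u = u 0 := by
  rw [betaOf, h, sub_zero, Real.sqrt_sq (pos_of_tailNorm_lt hu).le]

theorem arrowBlk_transpose (u : Fin (m + 1) → ℝ) : (arrowBlk u)ᵀ = arrowBlk u := by
  ext j j'
  simp only [transpose_apply, arrowBlk, of_apply]
  split_ifs <;> subst_vars <;> first | rfl | tauto

theorem Ublk_transpose (u : Fin (m + 1) → ℝ) : (Ublk u)ᵀ = Ublk u := by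
  ext j j'
  simp only [transpose_apply, Ublk, of_apply]
  split_ifs <;> subst_vars <;> first | rfl | tauto | ring

@[simp] theorem Ublk_zero_left (u : Fin (m + 1) → ℝ) (j : Fin (m + 1)) : Ublk u 0 j = 0 := by
  simp [Ublk]

@[simp] theorem Ublk_zero_right (u : Fin (m + 1) → ℝ) (j : Fin (m + 1)) : Ublk u j 0 = 0 := by
  simp [Ublk]

theorem Ublk_eq_zero_of_tailNormSq_eq_zero (h : tailNormSq u = 0) : Ublk u = 0 := by
  ext j j'
  simp [Ublk, h]

@[simp] theorem Ublk_mulVec_zero (u v : Fin (m + 1) → ℝ) : (Ublk u *ᵥ v) 0 = 0 := by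
  simp [mulVec, dotProduct]

theorem Ublk_mulVec_succ (h : tailNormSq u ≠ 0) (v : Fin (m + 1) → ℝ) (j : Fin m) :
    (Ublk u *ᵥ v) j.succ
      = (u 0 - betaOf u) *
          (v j.succ - u j.succ * (∑ l : Fin m, u l.succ * v l.succ) / tailNormSq u) := by
  have hentry : ∀ l : Fin m, Ublk u j.succ l.succ * v l.succ
      = (if j = l then (u 0 - betaOf u) * v l.succ else 0)
        - (u 0 - betaOf u) * u j.succ / tailNormSq u * (u l.succ * v l.succ) := by
    intro l
    simp only [Ublk, of_apply, Fin.succ_ne_zero, or_self, if_false, if_neg h, Fin.succ_inj]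
    split_ifs <;> ring
  simp only [mulVec, dotProduct, Fin.sum_univ_succ, Ublk_zero_right, zero_mul, zero_add, hentry,
    Finset.sum_sub_distrib, Finset.sum_ite_eq, Finset.mem_univ, if_true, ← Finset.mul_sum]
  ring

theorem Ublk_mulVec_self (u : Fin (m + 1) → ℝ) : Ublk u *ᵥ u = 0 := by
  rcases eq_or_ne (tailNormSq u) 0 with h | h
  · rw [Ublk_eq_zero_of_tailNormSq_eq_zero h, zero_mulVec]
  ext j
  refine Fin.cases ?_ (fun j => ?_) j
  · exact Ublk_mulVec_zero u u
  · have hsum : ∑ l : Fin m, u l.succ * u l.succ = tailNormSq u := by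
      simp only [tailNormSq, sq]
    rw [Ublk_mulVec_succ h, hsum, mul_div_assoc, div_self h]
    simp

theorem arrowBlk_mul_Ublk (u : Fin (m + 1) → ℝ) : arrowBlk u * Ublk u = u 0 • Ublk u := by
  ext j j'
  refine Fin.cases ?_ (fun j => ?_) j
  · have hrow : (arrowBlk u * Ublk u) 0 = u ᵥ* Ublk u := by
      ext j'
      simp [mul_apply, vecMul, dotProduct, arrowBlk]
    rw [hrow, ← mulVec_transpose, Ublk_transpose, Ublk_mulVec_self]
    simp
  · simp [mul_apply, Fin.sum_univ_succ, arrowBlk, Fin.succ_ne_zero, Fin.succ_inj, ite_mul]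

theorem Ublk_mul_arrowBlk (u : Fin (m + 1) → ℝ) : Ublk u * arrowBlk u = u 0 • Ublk u := by
  simpa only [transpose_mul, transpose_smul, Ublk_transpose, arrowBlk_transpose] using
    congrArg transpose (arrowBlk_mul_Ublk u)

theorem arrowBlk_sub_Tblk (hu : tailNorm u < u 0) : arrowBlk u - Tblk u = Ublk u := by
  ext j j'
  rcases eq_or_ne j 0 with rfl | hj
  · simp [arrowBlk, Tblk]
  rcases eq_or_ne j' 0 with rfl | hj'
  · simp [arrowBlk, Tblk, hj]
  simp only [Matrix.sub_apply, arrowBlk, Tblk, Ublk, of_apply, hj, hj', or_self, if_false]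
  rcases eq_or_ne (tailNormSq u) 0 with h | h
  · rw [if_pos h, betaOf_eq_of_tailNormSq_eq_zero hu h, eq_zero_of_tailNormSq_eq_zero h hj]
    split_ifs <;> ring
  -- `(u₀ + β)(u₀ - β) = ‖ū‖²` turns the rank-one term of `T` into that of `U`.
  have hβ : (betaOf u + u 0) * (u 0 - betaOf u) = tailNormSq u := by
    linear_combination -betaOf_sq hu
  have hpos : 0 < betaOf u + u 0 := add_pos (betaOf_pos hu) (pos_of_tailNorm_lt hu)
  have hdiv : u j * u j' / (betaOf u + u 0) = (u 0 - betaOf u) * (u j * u j') / tailNormSq u := by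
    rw [div_eq_div_iff hpos.ne' h]
    linear_combination (u j * u j') * hβ.symm
  rw [if_neg h, hdiv]
  split_ifs <;> ring

theorem dotProduct_Ublk_mulVec_nonneg (hu : tailNorm u < u 0) (v : Fin (m + 1) → ℝ) :
    0 ≤ v ⬝ᵥ (Ublk u *ᵥ v) := by
  rcases eq_or_ne (tailNormSq u) 0 with h | h
  · simp [Ublk_eq_zero_of_tailNormSq_eq_zero h]
  set S := ∑ l : Fin m, u l.succ * v l.succ
  set Q := ∑ l : Fin m, v l.succ ^ 2
  have hcs : S ^ 2 ≤ tailNormSq u * Q := Finset.sum_mul_sq_le_sq_mul_sq _ _ _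
  have hform :
      v ⬝ᵥ (Ublk u *ᵥ v) = (u 0 - betaOf u) * (tailNormSq u * Q - S ^ 2) / tailNormSq u := by
    have hterm : ∀ j : Fin m, v j.succ * (Ublk u *ᵥ v) j.succ
        = (u 0 - betaOf u) * v j.succ ^ 2
          - (u 0 - betaOf u) * S / tailNormSq u * (u j.succ * v j.succ) := fun j => by
      rw [Ublk_mulVec_succ h]
      ring
    simp only [dotProduct, Fin.sum_univ_succ, Ublk_mulVec_zero, mul_zero, zero_add, hterm,
      Finset.sum_sub_distrib, ← Finset.mul_sum]
    field_simp
    ring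
  rw [hform]
  have := betaOf_le hu
  have := tailNormSq_nonneg u
  positivity

theorem posSemidef_Ublk (hu : tailNorm u < u 0) : (Ublk u).PosSemidef :=
  .of_dotProduct_mulVec_nonneg
    (by rw [IsHermitian, conjTranspose_eq_transpose_of_trivial, Ublk_transpose])
    fun v => by simpa only [star_trivial] using dotProduct_Ublk_mulVec_nonneg hu v

theorem arrowBlk_mulVec_zero (u v : Fin (m + 1) → ℝ) :
    (arrowBlk u *ᵥ v) 0 = u 0 * v 0 + ∑ l : Fin m, u l.succ * v l.succ := by
  simp [mulVec, dotProduct, Fin.sum_univ_succ, arrowBlk]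

theorem arrowBlk_mulVec_succ (u v : Fin (m + 1) → ℝ) (j : Fin m) :
    (arrowBlk u *ᵥ v) j.succ = u j.succ * v 0 + u 0 * v j.succ := by
  simp [mulVec, dotProduct, Fin.sum_univ_succ, arrowBlk, Fin.succ_ne_zero, Fin.succ_inj]

theorem isUnit_det_arrowBlk (hu : tailNorm u < u 0) : IsUnit (arrowBlk u).det := by
  rw [isUnit_iff_ne_zero, Ne, ← exists_mulVec_eq_zero_iff]
  rintro ⟨v, hv, hAv⟩
  have hhead : u 0 * v 0 + ∑ l : Fin m, u l.succ * v l.succ = 0 := by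
    rw [← arrowBlk_mulVec_zero, hAv, Pi.zero_apply]
  have htail : ∀ l : Fin m, u l.succ * v 0 + u 0 * v l.succ = 0 := fun l => by
    rw [← arrowBlk_mulVec_succ, hAv, Pi.zero_apply]
  -- Eliminating the tail from the head equation leaves `(u₀² - ‖ū‖²) v₀ = 0`.
  have hv0 : (u 0 ^ 2 - tailNormSq u) * v 0 = 0 := by
    have hsum : u 0 * ∑ l : Fin m, u l.succ * v l.succ = -(tailNormSq u * v 0) := by
      simp only [Finset.mul_sum, tailNormSq, Finset.sum_mul, ← Finset.sum_neg_distrib]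
      exact Finset.sum_congr rfl fun l _ => by linear_combination u l.succ * htail l
    linear_combination u 0 * hhead - hsum
  have hv0 : v 0 = 0 :=
    (mul_eq_zero.1 hv0).resolve_left (sub_pos.2 (tailNormSq_lt_sq hu)).ne'
  refine hv (funext fun j => Fin.cases hv0 (fun l => ?_) j)
  simpa [hv0, (pos_of_tailNorm_lt hu).ne'] using htail l

theorem one_sub_smul_Ublk_mul_arrowBlk (hu : tailNorm u < u 0) :
    (1 - (u 0)⁻¹ • Ublk u) * arrowBlk u = Tblk u := by
  rw [Matrix.sub_mul, Matrix.one_mul, Matrix.smul_mul, Ublk_mul_arrowBlk, smul_smul,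
    inv_mul_cancel₀ (pos_of_tailNorm_lt hu).ne', one_smul, ← arrowBlk_sub_Tblk hu, sub_sub_cancel]

theorem arrowBlk_mul_one_sub_smul_Ublk (hu : tailNorm u < u 0) :
    arrowBlk u * (1 - (u 0)⁻¹ • Ublk u) = Tblk u := by
  rw [Matrix.mul_sub, Matrix.mul_one, Matrix.mul_smul, arrowBlk_mul_Ublk, smul_smul,
    inv_mul_cancel₀ (pos_of_tailNorm_lt hu).ne', one_smul, ← arrowBlk_sub_Tblk hu, sub_sub_cancel]

theorem Tblk_mul_inv_arrowBlk (hu : tailNorm u < u 0) :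
    Tblk u * (arrowBlk u)⁻¹ = 1 - (u 0)⁻¹ • Ublk u := by
  rw [← one_sub_smul_Ublk_mul_arrowBlk hu,
    mul_nonsing_inv_cancel_right _ _ (isUnit_det_arrowBlk hu)]

theorem inv_arrowBlk_mul_Tblk (hu : tailNorm u < u 0) :
    (arrowBlk u)⁻¹ * Tblk u = 1 - (u 0)⁻¹ • Ublk u := by
  rw [← arrowBlk_mul_one_sub_smul_Ublk hu, nonsing_inv_mul_cancel_left _ _ (isUnit_det_arrowBlk hu)]

theorem commute_arrowBlk_Tblk (hu : tailNorm u < u 0) : Commute (arrowBlk u) (Tblk u) := by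
  calc arrowBlk u * Tblk u = arrowBlk u * (1 - (u 0)⁻¹ • Ublk u) * arrowBlk u := by
        rw [Matrix.mul_assoc, one_sub_smul_Ublk_mul_arrowBlk hu]
    _ = Tblk u * arrowBlk u := by rw [arrowBlk_mul_one_sub_smul_Ublk hu]

theorem one_sub_smul_Ublk_mulVec_single_zero (c : ℝ) (u : Fin (m + 1) → ℝ) :
    (1 - c • Ublk u) *ᵥ Pi.single 0 1 = Pi.single 0 1 := by
  ext j
  simp [Pi.single_apply, one_apply]

end SingleBlock

section BlockDiagonal

variable {k : ℕ} {d : Fin k → ℕ} {x : Idx d → ℝ}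

theorem matV_sub_TV (hx : inIntK x) : matV x - TV x = UV x := by
  rw [matV, TV, UV, ← blockDiagonal'_sub]
  exact congrArg _ (funext fun i => arrowBlk_sub_Tblk (hx i))

theorem inv_matV (hx : inIntK x) :
    (matV x)⁻¹ = blockDiagonal' fun i => (arrowBlk (blk x i))⁻¹ :=
  inv_blockDiagonal' _ fun i => isUnit_det_arrowBlk (hx i)

theorem blk_unitE (i : Fin k) : blk (unitE (d := d)) i = Pi.single 0 1 := by
  ext j
  simp [blk, unitE, Pi.single_apply]

end BlockDiagonal

/-- Lemma 1: relations between the arrow-head matrix `X = mat(x)` and `T_x`. -/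
theorem arrow_T_relations {k : ℕ} {d : Fin k → ℕ}
    (x : Idx d → ℝ) (hx : inIntK x) :
    matV x - TV x = UV x ∧
    TV x * (matV x)⁻¹ = (matV x)⁻¹ * TV x ∧
    TV x * (matV x)⁻¹ =
      Matrix.blockDiagonal'
        (fun i => (1 : Matrix (Fin (d i + 1)) (Fin (d i + 1)) ℝ)
          - (x ⟨i, 0⟩)⁻¹ • Ublk (blk x i)) ∧
    (TV x * (matV x)⁻¹).mulVec unitE = unitE ∧
    matV x * TV x = TV x * matV x ∧
    (matV x - TV x).PosSemidef := by
  have hTX : TV x * (matV x)⁻¹ =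
      blockDiagonal' fun i => 1 - (x ⟨i, 0⟩)⁻¹ • Ublk (blk x i) := by
    rw [TV, inv_matV hx, ← blockDiagonal'_mul]
    exact congrArg _ (funext fun i => Tblk_mul_inv_arrowBlk (hx i))
  have hXT : (matV x)⁻¹ * TV x =
      blockDiagonal' fun i => 1 - (x ⟨i, 0⟩)⁻¹ • Ublk (blk x i) := by
    rw [TV, inv_matV hx, ← blockDiagonal'_mul]
    exact congrArg _ (funext fun i => inv_arrowBlk_mul_Tblk (hx i))
  refine ⟨matV_sub_TV hx, hTX.trans hXT.symm, hTX, ?_, ?_, ?_⟩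
  · ext ⟨i, j⟩
    rw [hTX, blockDiagonal'_mulVec_apply]
    exact congrFun (blk_unitE i ▸ one_sub_smul_Ublk_mulVec_single_zero _ _) j
  · rw [matV, TV, ← blockDiagonal'_mul, ← blockDiagonal'_mul]
    exact congrArg _ (funext fun i => (commute_arrowBlk_Tblk (hx i)).eq)
  · rw [matV_sub_TV hx]
    exact PosSemidef.blockDiagonal' fun i => posSemidef_Ublk (hx i)

end SOCP
end

section
/- Suppose (Δx, Δy, Δs) satisfies the scaled Newton system for some ν ∈ ℝ and D ∈ G. Then for every α ∈ ℝ: A x(α) = (1 − (1−ν)α) A x; Aᵀ y(α) + C x(α) + s(α) = (1 − (1−ν)α)(Aᵀy + Cx + s); x(α)ᵀ s(α) = (1 − (1−ν)α) xᵀs; and Δxᵀ Δs = 0. -/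
open scoped BigOperators
open Matrix

namespace SOCP

/-!
Shifting the Newton direction by `(1 - ν)(x, y, s)` turns the first two Newton equations into
homogeneous ones, so by skew-symmetry of `C` the shifted directions are orthogonal. Contracting
the third equation with `e` (using `eᵀ mat(u) w = uᵀ w` and that `D⁻ᵀ`, `D` cancel in inner
products) gives `xᵀΔs + Δxᵀs = -(1 - ν) xᵀs`, which turns that orthogonality into `ΔxᵀΔs = 0`;
the rest is linearity in `α`.
-/

section DotProduct

variable {m n R : Type*} [Fintype m] [Fintype n] [CommRing R]

lemma dotProduct_mulVec_self_eq_zero_of_transpose_eq_neg [IsAddTorsionFree R]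
    {C : Matrix n n R} (hC : Cᵀ = -C) (v : n → R) : v ⬝ᵥ C *ᵥ v = 0 := by
  have h : v ⬝ᵥ C *ᵥ v = -(v ⬝ᵥ C *ᵥ v) := by
    conv_lhs => rw [dotProduct_mulVec, ← mulVec_transpose, hC, neg_mulVec, neg_dotProduct,
      dotProduct_comm]
  exact self_eq_neg.mp h

lemma dotProduct_eq_zero_of_skew_system [IsAddTorsionFree R]
    {A : Matrix m n R} {C : Matrix n n R} (hC : Cᵀ = -C)
    {u z : n → R} {w : m → R} (hu : A *ᵥ u = 0) (hz : Aᵀ *ᵥ w + C *ᵥ u + z = 0) :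
    u ⬝ᵥ z = 0 := by
  rw [eq_neg_of_add_eq_zero_right hz, dotProduct_neg, dotProduct_add,
    dotProduct_mulVec_self_eq_zero_of_transpose_eq_neg hC, dotProduct_mulVec, vecMul_transpose,
    hu, zero_dotProduct, add_zero, neg_zero]

lemma inv_transpose_mulVec_dotProduct_mulVec [DecidableEq n] {D : Matrix n n R}
    (hD : IsUnit D.det) (v w : n → R) : (D⁻¹)ᵀ *ᵥ v ⬝ᵥ D *ᵥ w = v ⬝ᵥ w := by
  rw [mulVec_transpose, ← dotProduct_mulVec, mulVec_mulVec, nonsing_inv_mul D hD, one_mulVec]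

end DotProduct

section BlockVectors

variable {k : ℕ} {d : Fin k → ℕ}

lemma dotV_eq_dotProduct {ι : Type*} [Fintype ι] (u v : ι → ℝ) : dotV u v = u ⬝ᵥ v := rfl

lemma unitE_dotProduct (v : Idx d → ℝ) : unitE ⬝ᵥ v = ∑ i : Fin k, v ⟨i, 0⟩ := by
  simp only [dotProduct, unitE, ← Finset.univ_sigma_univ, Finset.sum_sigma, ite_mul, one_mul,
    zero_mul]
  exact Finset.sum_congr rfl fun i _ => by
    rw [Finset.sum_ite_eq' Finset.univ (0 : Fin (d i + 1)) fun j => v ⟨i, j⟩]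
    simp

lemma unitE_dotProduct_unitE : unitE ⬝ᵥ (unitE : Idx d → ℝ) = k := by
  simp [unitE_dotProduct, unitE]

lemma blockDiagonal'_mulVec_apply {o R : Type*} {n : o → Type*} [Fintype o] [DecidableEq o]
    [∀ i, Fintype (n i)] [NonUnitalNonAssocSemiring R] (f : ∀ i, Matrix (n i) (n i) R)
    (w : (Σ i, n i) → R) (i : o) (j : n i) :
    (blockDiagonal' f *ᵥ w) ⟨i, j⟩ = ∑ j', f i j j' * w ⟨i, j'⟩ := by
  rw [mulVec, dotProduct, ← Finset.univ_sigma_univ, Finset.sum_sigma,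
    Finset.sum_eq_single_of_mem i (Finset.mem_univ i)]
  · exact Finset.sum_congr rfl fun j' _ => by rw [blockDiagonal'_apply_eq]
  · intro b _ hb
    exact Finset.sum_eq_zero fun j' _ => by
      rw [blockDiagonal'_apply_ne _ _ _ fun h => hb h.symm, zero_mul]

-- The first row of `mat(u)` is `uᵀ`.
lemma unitE_dotProduct_matV_mulVec (u w : Idx d → ℝ) : unitE ⬝ᵥ matV u *ᵥ w = u ⬝ᵥ w := by
  rw [unitE_dotProduct]
  simp [matV, blockDiagonal'_mulVec_apply, arrowBlk, blk, dotProduct,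
    ← Finset.univ_sigma_univ, Finset.sum_sigma]

lemma unitE_dotProduct_jmul (u v : Idx d → ℝ) : unitE ⬝ᵥ jmul u v = u ⬝ᵥ v := by
  rw [unitE_dotProduct]
  simp [jmul, dotProduct, ← Finset.univ_sigma_univ, Finset.sum_sigma]

lemma Qblk_mul_Qblk {m : ℕ} : (Qblk : Matrix (Fin (m + 1)) (Fin (m + 1)) ℝ) * Qblk = 1 := by
  have hQ : (Qblk : Matrix (Fin (m + 1)) (Fin (m + 1)) ℝ) =
      diagonal fun j => if j = 0 then 1 else -1 := by
    ext j j'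
    by_cases h : j = j' <;> simp [Qblk, h]
  rw [hQ, diagonal_mul_diagonal, ← diagonal_one]
  congr 1
  funext j
  split_ifs <;> norm_num

-- The inverse of a block `θ G` is `θ⁻¹ Q Gᵀ Q`.
lemma isUnit_det_of_mem_scalingGroup {D : Matrix (Idx d) (Idx d) ℝ} (hD : D ∈ scalingGroup d) :
    IsUnit D.det := by
  obtain ⟨θ, G, hθ, hG, rfl⟩ := hD
  have hinv : blockDiagonal' (fun i => (θ i)⁻¹ • (Qblk * (G i)ᵀ * Qblk)) *
      blockDiagonal' (fun i => θ i • G i) = 1 := by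
    rw [← blockDiagonal'_mul, ← blockDiagonal'_one]
    congr 1
    funext i
    rw [smul_mul_smul_comm, inv_mul_cancel₀ (hθ i).ne', one_smul, Matrix.mul_assoc,
      Matrix.mul_assoc, ← Matrix.mul_assoc (G i)ᵀ, hG i, Qblk_mul_Qblk, Pi.one_apply]
  exact IsUnit.of_mul_eq_one _ (by rw [mul_comm, ← det_mul, hinv, det_one])

end BlockVectors

namespace NewtonSys

variable {k p : ℕ} {d : Fin k → ℕ} {A : Matrix (Fin p) (Idx d) ℝ} {Cm : Matrix (Idx d) (Idx d) ℝ}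
  {x s dx ds : Idx d → ℝ} {y dy : Fin p → ℝ} {ν : ℝ} {D : Matrix (Idx d) (Idx d) ℝ}

lemma dotProduct_add_dotProduct (hk : k ≠ 0) (hD : IsUnit D.det)
    (hN : NewtonSys A Cm x y s ν D dx dy ds) :
    x ⬝ᵥ ds + dx ⬝ᵥ s = -((1 - ν) * (x ⬝ᵥ s)) := by
  have h := congrArg (unitE ⬝ᵥ ·) hN.2.2
  simp only [dotProduct_add, dotProduct_sub, dotProduct_smul, unitE_dotProduct_matV_mulVec,
    unitE_dotProduct_jmul, unitE_dotProduct_unitE, inv_transpose_mulVec_dotProduct_mulVec hD,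
    smul_eq_mul] at h
  rw [dotProduct_comm (D *ᵥ s), inv_transpose_mulVec_dotProduct_mulVec hD] at h
  have hμ : muV x s * k = x ⬝ᵥ s := div_mul_cancel₀ _ (Nat.cast_ne_zero.mpr hk)
  linear_combination h + ν * hμ

lemma dotProduct_eq_zero (hk : k ≠ 0) (hC : Cmᵀ = -Cm) (hD : IsUnit D.det)
    (hN : NewtonSys A Cm x y s ν D dx dy ds) : dx ⬝ᵥ ds = 0 := by
  have horth : (dx + (1 - ν) • x) ⬝ᵥ (ds + (1 - ν) • s) = 0 := by
    refine dotProduct_eq_zero_of_skew_system (A := A) hC (w := dy + (1 - ν) • y) ?_ ?_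
    · rw [mulVec_add, mulVec_smul, hN.1, neg_add_cancel]
    · rw [mulVec_add, mulVec_add, mulVec_smul, mulVec_smul]
      linear_combination (norm := module) hN.2.1
  simp only [dotProduct_add, add_dotProduct, dotProduct_smul, smul_dotProduct,
    smul_eq_mul] at horth
  linear_combination horth - (1 - ν) * dotProduct_add_dotProduct hk hD hN

end NewtonSys

theorem newton_step_identities_general {k p : ℕ} {d : Fin k → ℕ} (hk : 0 < k)
    (A : Matrix (Fin p) (Idx d) ℝ)
    (Cm : Matrix (Idx d) (Idx d) ℝ) (hC : Cmᵀ = -Cm)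
    (x s : Idx d → ℝ) (y : Fin p → ℝ)
    (ν : ℝ) (D : Matrix (Idx d) (Idx d) ℝ) (hD : D ∈ scalingGroup d)
    (dx ds : Idx d → ℝ) (dy : Fin p → ℝ)
    (hN : NewtonSys A Cm x y s ν D dx dy ds) :
    (∀ α : ℝ, A.mulVec (x + α • dx) = (1 - (1 - ν) * α) • A.mulVec x) ∧
    (∀ α : ℝ, Aᵀ.mulVec (y + α • dy) + Cm.mulVec (x + α • dx) + (s + α • ds)
      = (1 - (1 - ν) * α) • (Aᵀ.mulVec y + Cm.mulVec x + s)) ∧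
    (∀ α : ℝ, dotV (x + α • dx) (s + α • ds) = (1 - (1 - ν) * α) * dotV x s) ∧
    dotV dx ds = 0 := by
  have hD' := isUnit_det_of_mem_scalingGroup hD
  have hcompl := hN.dotProduct_add_dotProduct hk.ne' hD'
  have horth := hN.dotProduct_eq_zero hk.ne' hC hD'
  refine ⟨fun α => ?_, fun α => ?_, fun α => ?_, horth⟩
  · rw [mulVec_add, mulVec_smul, hN.1]
    module
  · rw [mulVec_add, mulVec_add, mulVec_smul, mulVec_smul]
    linear_combination (norm := module) α • hN.2.1
  · simp only [dotV_eq_dotProduct, dotProduct_add, add_dotProduct, dotProduct_smul,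
      smul_dotProduct, smul_eq_mul]
    linear_combination α * hcompl + α ^ 2 * horth

/-- Theorem 3: improvement of the residuals and gap along the search direction. -/
theorem newton_step_identities {k p : ℕ} {d : Fin k → ℕ} (hk : 0 < k)
    (A : Matrix (Fin p) (Idx d) ℝ) (hrank : A.rank = p)
    (Cm : Matrix (Idx d) (Idx d) ℝ) (hC : Cmᵀ = -Cm)
    (x s : Idx d → ℝ) (y : Fin p → ℝ) (hx : inIntK x) (hs : inIntK s)
    (ν : ℝ) (D : Matrix (Idx d) (Idx d) ℝ) (hD : D ∈ scalingGroup d)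
    (dx ds : Idx d → ℝ) (dy : Fin p → ℝ)
    (hN : NewtonSys A Cm x y s ν D dx dy ds) :
    (∀ α : ℝ, A.mulVec (x + α • dx) = (1 - (1 - ν) * α) • A.mulVec x) ∧
    (∀ α : ℝ, Aᵀ.mulVec (y + α • dy) + Cm.mulVec (x + α • dx) + (s + α • ds)
      = (1 - (1 - ν) * α) • (Aᵀ.mulVec y + Cm.mulVec x + s)) ∧
    (∀ α : ℝ, dotV (x + α • dx) (s + α • ds) = (1 - (1 - ν) * α) * dotV x s) ∧
    dotV dx ds = 0 :=
  newton_step_identities_general hk A Cm hC x s y ν D hD dx ds dy hN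

end SOCP
end
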